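/- arXiv:1512.03029 — 2 statements merged into one kernel-verified Lean document; each statement's English description precedes it below -/
import Mathlib

section
/- Assume h is convex and non-increasing on (0,∞), and assume V : ℝ → ℝ and W : ℝ → ℝ are convex. Then the one-dimensional discrete energy Ẽ_N is convex on the convex open set {x ∈ ℝ^N : x₁ < x₂ < ⋯ < x_N}; that is, for all strictly increasing configurations x, y and all λ ∈ [0,1], Ẽ_N(λx + (1−λ)y) ≤ λ Ẽ_N(x) + (1−λ) Ẽ_N(y). -/
open Real Finset

/-- `rᵢ = min(Δxᵢ, Δxᵢ₊₁)` with the convention `Δx₁ = Δx_{N+1} = +∞`, for `N = n + 2`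
particles indexed from `0` to `n+1` (so `r₀ = Δx₁` and `r_{n+1} = Δx_{n+1}`). -/
noncomputable def rball (n : ℕ) (x : Fin (n + 2) → ℝ) (i : Fin (n + 2)) : ℝ :=
  if i.val = 0 then x 1 - x 0
  else if i.val = n + 1 then x i - x (i - 1)
  else min (x i - x (i - 1)) (x (i + 1) - x i)

/-- The one-dimensional discrete energy
`Ẽ_N(x) = Σᵢ wᵢ h(rᵢ/wᵢ) + Σᵢ wᵢ V(xᵢ) + (1/2) Σᵢ Σ_{j≠i} wᵢwⱼ W(xᵢ − xⱼ)`,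
where `h(λ) = λ H(1/λ)`, so that `wᵢ h(rᵢ/wᵢ) = rᵢ H(wᵢ/rᵢ)`. -/
noncomputable def discreteEnergy (n : ℕ) (w : Fin (n + 2) → ℝ) (h V W : ℝ → ℝ)
    (x : Fin (n + 2) → ℝ) : ℝ :=
  ∑ i, w i * h (rball n x i / w i) + ∑ i, w i * V (x i) +
    (1 / 2) * ∑ i, ∑ j ∈ Finset.univ.erase i, w i * w j * W (x i - x j)

lemma rball_pos {n : ℕ} {x : Fin (n + 2) → ℝ} (hx : StrictMono x) (i : Fin (n + 2)) :
    0 < rball n x i := by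
  have key1 : i.val ≠ 0 → x (i - 1) < x i := by
    intro hi
    apply hx
    rw [Fin.lt_def, Fin.coe_sub_one, if_neg (fun hh => hi (by simp [hh]))]
    omega
  have key2 : i.val ≠ n + 1 → x i < x (i + 1) := by
    intro hi
    apply hx
    rw [Fin.lt_def, Fin.val_add_one, if_neg (fun hh => hi (by simp [hh]))]
    omega
  unfold rball
  split_ifs with h1 h2
  · have : (0 : Fin (n + 2)) < 1 := by
      rw [Fin.lt_def]; simp
    linarith [hx this]
  · linarith [key1 h1]
  · exact lt_min (by linarith [key1 h1]) (by linarith [key2 h2])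

lemma rball_comb {n : ℕ} (x y : Fin (n + 2) → ℝ) (l : ℝ) (hl0 : 0 ≤ l) (hl1 : l ≤ 1)
    (i : Fin (n + 2)) :
    l * rball n x i + (1 - l) * rball n y i ≤
      rball n (fun j => l * x j + (1 - l) * y j) i := by
  unfold rball
  dsimp only
  split_ifs with h1 h2
  · exact le_of_eq (by ring)
  · exact le_of_eq (by ring)
  · refine le_min ?_ ?_
    · have hx1 := mul_le_mul_of_nonneg_left (min_le_left (x i - x (i - 1)) (x (i + 1) - x i)) hl0
      have hy1 := mul_le_mul_of_nonneg_left (min_le_left (y i - y (i - 1)) (y (i + 1) - y i))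
        (by linarith : (0:ℝ) ≤ 1 - l)
      linarith
    · have hx1 := mul_le_mul_of_nonneg_left (min_le_right (x i - x (i - 1)) (x (i + 1) - x i)) hl0
      have hy1 := mul_le_mul_of_nonneg_left (min_le_right (y i - y (i - 1)) (y (i + 1) - y i))
        (by linarith : (0:ℝ) ≤ 1 - l)
      linarith

/-- if `h` is convex and non-increasing on `(0,∞)` and `V, W : ℝ → ℝ` are
convex, then the one-dimensional discrete energy `Ẽ_N` is convex on the set of strictly
increasing configurations `x₁ < ⋯ < x_N`. -/
theorem discreteEnergy_convex (n : ℕ) (w : Fin (n + 2) → ℝ)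
    (hw : ∀ i, 0 < w i) (hw1 : ∑ i, w i = 1) (h V W : ℝ → ℝ)
    (hconv : ConvexOn ℝ (Set.Ioi (0 : ℝ)) h) (hanti : AntitoneOn h (Set.Ioi (0 : ℝ)))
    (hV : ConvexOn ℝ Set.univ V) (hW : ConvexOn ℝ Set.univ W)
    (x y : Fin (n + 2) → ℝ) (hx : StrictMono x) (hy : StrictMono y)
    (l : ℝ) (hl0 : 0 ≤ l) (hl1 : l ≤ 1) :
    discreteEnergy n w h V W (fun i => l * x i + (1 - l) * y i) ≤
      l * discreteEnergy n w h V W x + (1 - l) * discreteEnergy n w h V W y := by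
  have hl2 : (0:ℝ) ≤ 1 - l := by linarith
  set z : Fin (n + 2) → ℝ := fun i => l * x i + (1 - l) * y i with hzdef
  -- h term
  have hA : ∀ i : Fin (n + 2), w i * h (rball n z i / w i) ≤
      l * (w i * h (rball n x i / w i)) + (1 - l) * (w i * h (rball n y i / w i)) := by
    intro i
    have hwi := hw i
    have hrx := rball_pos hx i
    have hry := rball_pos hy i
    have hcomb := rball_comb x y l hl0 hl1 i
    have hpos : 0 < l * rball n x i + (1 - l) * rball n y i := by
      have hm : 0 < min (rball n x i) (rball n y i) := lt_min hrx hry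
      have h1 := mul_le_mul_of_nonneg_left (min_le_left (rball n x i) (rball n y i)) hl0
      have h2 := mul_le_mul_of_nonneg_left (min_le_right (rball n x i) (rball n y i)) hl2
      nlinarith
    have hrz : 0 < rball n z i := lt_of_lt_of_le hpos hcomb
    have key1 : h (rball n z i / w i) ≤
        h ((l * rball n x i + (1 - l) * rball n y i) / w i) := by
      refine hanti (Set.mem_Ioi.2 (div_pos hpos hwi)) (Set.mem_Ioi.2 (div_pos hrz hwi)) ?_
      gcongr
    have key2 : h ((l * rball n x i + (1 - l) * rball n y i) / w i) ≤
        l * h (rball n x i / w i) + (1 - l) * h (rball n y i / w i) := by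
      have := hconv.2 (Set.mem_Ioi.2 (div_pos hrx hwi)) (Set.mem_Ioi.2 (div_pos hry hwi))
        hl0 hl2 (by ring)
      simpa [smul_eq_mul, add_div, mul_div_assoc] using this
    calc w i * h (rball n z i / w i)
        ≤ w i * (l * h (rball n x i / w i) + (1 - l) * h (rball n y i / w i)) :=
          mul_le_mul_of_nonneg_left (key1.trans key2) hwi.le
      _ = l * (w i * h (rball n x i / w i)) + (1 - l) * (w i * h (rball n y i / w i)) := by ring
  have hA' : ∑ i, w i * h (rball n z i / w i) ≤
      l * ∑ i, w i * h (rball n x i / w i) + (1 - l) * ∑ i, w i * h (rball n y i / w i) := by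
    calc ∑ i, w i * h (rball n z i / w i)
        ≤ ∑ i, (l * (w i * h (rball n x i / w i)) + (1 - l) * (w i * h (rball n y i / w i))) :=
          Finset.sum_le_sum fun i _ => hA i
      _ = _ := by rw [Finset.sum_add_distrib, Finset.mul_sum, Finset.mul_sum]
  -- V term
  have hB' : ∑ i, w i * V (z i) ≤
      l * ∑ i, w i * V (x i) + (1 - l) * ∑ i, w i * V (y i) := by
    calc ∑ i, w i * V (z i)
        ≤ ∑ i, (l * (w i * V (x i)) + (1 - l) * (w i * V (y i))) := by
          refine Finset.sum_le_sum fun i _ => ?_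
          have := hV.2 (Set.mem_univ (x i)) (Set.mem_univ (y i)) hl0 hl2 (by ring)
          simp only [smul_eq_mul] at this
          calc w i * V (z i) ≤ w i * (l * V (x i) + (1 - l) * V (y i)) :=
                mul_le_mul_of_nonneg_left this (hw i).le
            _ = _ := by ring
      _ = _ := by rw [Finset.sum_add_distrib, Finset.mul_sum, Finset.mul_sum]
  -- W term
  have hC' : ∑ i, ∑ j ∈ Finset.univ.erase i, w i * w j * W (z i - z j) ≤
      l * ∑ i, ∑ j ∈ Finset.univ.erase i, w i * w j * W (x i - x j) +
        (1 - l) * ∑ i, ∑ j ∈ Finset.univ.erase i, w i * w j * W (y i - y j) := by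
    calc ∑ i, ∑ j ∈ Finset.univ.erase i, w i * w j * W (z i - z j)
        ≤ ∑ i, ∑ j ∈ Finset.univ.erase i,
            (l * (w i * w j * W (x i - x j)) + (1 - l) * (w i * w j * W (y i - y j))) := by
          refine Finset.sum_le_sum fun i _ => Finset.sum_le_sum fun j _ => ?_
          have hWij := hW.2 (Set.mem_univ (x i - x j)) (Set.mem_univ (y i - y j)) hl0 hl2
            (by ring)
          simp only [smul_eq_mul] at hWij
          have hz : z i - z j = l * (x i - x j) + (1 - l) * (y i - y j) := by
            simp only [hzdef]; ring
          rw [hz]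
          have hwij : (0:ℝ) ≤ w i * w j := mul_nonneg (hw i).le (hw j).le
          calc w i * w j * W (l * (x i - x j) + (1 - l) * (y i - y j))
              ≤ w i * w j * (l * W (x i - x j) + (1 - l) * W (y i - y j)) :=
                mul_le_mul_of_nonneg_left hWij hwij
            _ = _ := by ring
      _ = _ := by
          simp_rw [Finset.sum_add_distrib, Finset.mul_sum]
  unfold discreteEnergy
  linarith
end

section
/- Fix N ≥ 2, weights w₁,…,w_N > 0 with Σᵢ wᵢ = 1, and 0 < χ < 1. Let V : ℝ → ℝ be continuous and coercive (V(x) → +∞ as |x| → ∞), and assume the function x ↦ inf_{y∈ℝ} (w₁ V(y) + w_N V(x + y)) − log|x| is coercive on ℝ. Then for every E₀ ∈ ℝ there exists ℓ > 0 such that every strictly increasing configuration x₁ < ⋯ < x_N with discrete Keller–Segel energy Ẽ_N(x) ≤ E₀ satisfies |xᵢ| ≤ ℓ for all i ∈ {1,…,N}. -/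
open Real Finset Filter

/-- The one-dimensional discrete modified Keller–Segel energy with confinement `V` and
chemosensitivity `χ`:
`Ẽ_N(x) = Σᵢ wᵢ log(wᵢ/rᵢ) + Σᵢ wᵢ V(xᵢ) + χ Σᵢ Σ_{j≠i} wᵢwⱼ log|xᵢ − xⱼ|`. -/
noncomputable def kellerSegelEnergy (n : ℕ) (w : Fin (n + 2) → ℝ) (V : ℝ → ℝ) (χ : ℝ)
    (x : Fin (n + 2) → ℝ) : ℝ :=
  ∑ i, w i * Real.log (w i / rball n x i) + ∑ i, w i * V (x i) +
    χ * ∑ i, ∑ j ∈ Finset.univ.erase i, w i * w j * Real.log |x i - x j|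

/-!
Since `rᵢ ≤ |xᵢ - xⱼ|` for `j ≠ i`, the interaction term is at least `χ Σᵢ (1 - wᵢ) wᵢ log rᵢ`.
For `χ ≤ 1` the coefficients `wᵢ (1 - χ (1 - wᵢ))` of the remaining `-log rᵢ` are nonnegative
with sum at most one, and every `rᵢ` is at most the diameter `D = x_N - x₁`; so on a sublevel
set `Σᵢ wᵢ V(xᵢ) ≤ c + log⁺ D`. Bounding `V` below by its minimum at all but the two extreme
particles, the coercivity of `inf_y (w₁ V(y) + w_N V(D + y)) - log D` bounds `D`. The potential
is then bounded, so coercivity of `V` bounds `x₁`, and `|xᵢ| ≤ |x₁| + D`.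
-/

theorem exists_abs_le_of_tendsto_cocompact_atTop {f : ℝ → ℝ}
    (hf : Tendsto f (cocompact ℝ) atTop) (K : ℝ) : ∃ R, ∀ t, f t ≤ K → |t| ≤ R := by
  obtain ⟨s, hs, hsub⟩ := mem_cocompact.1 (hf (Ioi_mem_atTop K))
  obtain ⟨R, hR⟩ := (Metric.isBounded_iff_subset_closedBall 0).1 hs.isBounded
  refine ⟨R, fun t ht => ?_⟩
  have hts : t ∈ s := by_contra fun h => (hsub h).not_ge ht
  simpa using hR hts

theorem sum_mul_le_of_sum_le_one {ι : Type*} [Fintype ι] {c a : ι → ℝ} {L : ℝ}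
    (hc : ∀ i, 0 ≤ c i) (hc1 : ∑ i, c i ≤ 1) (ha : ∀ i, a i ≤ L) (hL : 0 ≤ L) :
    ∑ i, c i * a i ≤ L :=
  calc ∑ i, c i * a i ≤ ∑ i, c i * L :=
        sum_le_sum fun i _ => mul_le_mul_of_nonneg_left (ha i) (hc i)
    _ = (∑ i, c i) * L := (sum_mul _ _ _).symm
    _ ≤ L := mul_le_of_le_one_left hL hc1

theorem sum_mul_add_one_sub_sum_mul_le {ι : Type*} [Fintype ι] [DecidableEq ι] (s : Finset ι)
    {w f : ι → ℝ} {m : ℝ} (hw : ∀ i, 0 ≤ w i) (hw1 : ∑ i, w i = 1) (hm : ∀ i, m ≤ f i) :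
    ∑ i ∈ s, w i * f i + (1 - ∑ i ∈ s, w i) * m ≤ ∑ i, w i * f i := by
  rw [← hw1, ← sum_add_sum_compl s w, ← sum_add_sum_compl s (fun i => w i * f i),
    add_sub_cancel_left, sum_mul]
  exact add_le_add_right (sum_le_sum fun i _ => mul_le_mul_of_nonneg_left (hm i) (hw i)) _

theorem Fin.le_sub_one_of_lt {n : ℕ} {i j : Fin (n + 1)} (h : j < i) : j ≤ i - 1 := by
  rw [Fin.le_def, Fin.coe_sub_one, if_neg (Fin.ne_zero_of_lt h)]
  rw [Fin.lt_def] at h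
  omega

namespace KellerSegel

variable {n : ℕ} {x : Fin (n + 2) → ℝ} {w : Fin (n + 2) → ℝ} {V : ℝ → ℝ} {χ : ℝ}

theorem rball_le_sub_succ {i : Fin (n + 2)} (hi : i ≠ Fin.last (n + 1)) :
    rball n x i ≤ x (i + 1) - x i := by
  unfold rball
  split_ifs with h0 hlast
  · obtain rfl : i = 0 := Fin.ext h0
    rw [zero_add]
  · exact absurd (Fin.ext hlast) hi
  · exact min_le_right _ _

theorem rball_le_sub_pred {i : Fin (n + 2)} (hi : i ≠ 0) :
    rball n x i ≤ x i - x (i - 1) := by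
  unfold rball
  split_ifs with h0 hlast
  · exact absurd (Fin.ext h0) hi
  · exact le_rfl
  · exact min_le_left _ _

theorem rball_le_abs_sub (hx : Monotone x) {i j : Fin (n + 2)} (hne : j ≠ i) :
    rball n x i ≤ |x i - x j| := by
  rcases hne.lt_or_gt with hji | hij
  · calc rball n x i ≤ x i - x (i - 1) := rball_le_sub_pred (Fin.ne_zero_of_lt hji)
      _ ≤ x i - x j := by linarith [hx (Fin.le_sub_one_of_lt hji)]
      _ ≤ |x i - x j| := le_abs_self _
  · calc rball n x i ≤ x (i + 1) - x i := rball_le_sub_succ (Fin.ne_last_of_lt hij)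
      _ ≤ x j - x i := by linarith [hx (Fin.add_one_le_of_lt hij)]
      _ ≤ |x i - x j| := by rw [abs_sub_comm]; exact le_abs_self _

theorem rball_pos (hx : StrictMono x) (i : Fin (n + 2)) : 0 < rball n x i := by
  have hpred (h : i ≠ 0) : 0 < x i - x (i - 1) :=
    sub_pos.2 (hx (Fin.sub_one_lt_iff.2 (Fin.pos_iff_ne_zero.2 h)))
  unfold rball
  split_ifs with h0 hlast
  · exact sub_pos.2 (hx Fin.zero_lt_one)
  · exact hpred (fun h => h0 (by simp [h]))
  · refine lt_min (hpred (fun h => h0 (by simp [h]))) (sub_pos.2 (hx (Fin.lt_add_one_iff.2 ?_)))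
    exact Fin.lt_last_iff_ne_last.2 (fun h => hlast (by simp [h]))

theorem abs_sub_le_sub_zero (hx : Monotone x) (i j : Fin (n + 2)) :
    |x i - x j| ≤ x (Fin.last (n + 1)) - x 0 := by
  have := hx (Fin.zero_le i); have := hx (Fin.zero_le j)
  have := hx (Fin.le_last i); have := hx (Fin.le_last j)
  rw [abs_sub_le_iff]; constructor <;> linarith

theorem rball_le_sub_zero (hx : Monotone x) (i : Fin (n + 2)) :
    rball n x i ≤ x (Fin.last (n + 1)) - x 0 :=
  have ⟨j, hj⟩ := exists_ne i
  (rball_le_abs_sub hx hj).trans (abs_sub_le_sub_zero hx i j)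

theorem sum_one_sub_mul_log_rball_le (hx : StrictMono x) (hw : ∀ i, 0 ≤ w i)
    (hw1 : ∑ i, w i = 1) :
    ∑ i, (1 - w i) * w i * log (rball n x i) ≤
      ∑ i, ∑ j ∈ univ.erase i, w i * w j * log |x i - x j| := by
  refine sum_le_sum fun i _ => ?_
  have hcompl : 1 - w i = ∑ j ∈ univ.erase i, w j := by
    rw [sum_erase_eq_sub (mem_univ i), hw1]
  rw [hcompl, sum_mul, sum_mul]
  refine sum_le_sum fun j hj => ?_
  rw [mul_comm (w j)]
  exact mul_le_mul_of_nonneg_left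
    (log_le_log (rball_pos hx i) (rball_le_abs_sub hx.monotone (ne_of_mem_erase hj)))
    (mul_nonneg (hw i) (hw j))

theorem sum_mul_log_rball_sub_le (hx : StrictMono x) (hw : ∀ i, 0 ≤ w i)
    (hw1 : ∑ i, w i = 1) (hχ0 : 0 ≤ χ) (hχ1 : χ ≤ 1) :
    ∑ i, w i * log (rball n x i) - χ * ∑ i, (1 - w i) * w i * log (rball n x i) ≤
      log⁺ (x (Fin.last (n + 1)) - x 0) := by
  have hw_le (i) : w i ≤ 1 := hw1 ▸ single_le_sum (fun j _ => hw j) (mem_univ i)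
  have hχw (i) : 0 ≤ χ * (1 - w i) * w i :=
    mul_nonneg (mul_nonneg hχ0 (sub_nonneg.2 (hw_le i))) (hw i)
  calc _ = ∑ i, w i * (1 - χ * (1 - w i)) * log (rball n x i) := by
        rw [mul_sum, ← sum_sub_distrib]
        exact sum_congr rfl fun i _ => by ring
    _ ≤ _ := by
      refine sum_mul_le_of_sum_le_one (fun i => ?_) ?_ (fun i => ?_) posLog_nonneg
      · exact mul_nonneg (hw i) (by nlinarith [mul_nonneg hχ0 (hw i)])
      · calc _ ≤ ∑ i, w i := sum_le_sum fun i _ => by nlinarith [hχw i]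
          _ = 1 := hw1
      · exact (log_le_log (rball_pos hx i) (rball_le_sub_zero hx.monotone i)).trans
          (le_max_right _ _)

theorem le_kellerSegelEnergy (hx : StrictMono x) (hw : ∀ i, 0 < w i) (hw1 : ∑ i, w i = 1)
    (hχ0 : 0 ≤ χ) (hχ1 : χ ≤ 1) :
    ∑ i, w i * log (w i) + ∑ i, w i * V (x i) - log⁺ (x (Fin.last (n + 1)) - x 0) ≤
      kellerSegelEnergy n w V χ x := by
  have hentropy : ∑ i, w i * log (w i / rball n x i) =
      ∑ i, w i * log (w i) - ∑ i, w i * log (rball n x i) := by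
    rw [← sum_sub_distrib]
    exact sum_congr rfl fun i _ => by rw [log_div (hw i).ne' (rball_pos hx i).ne']; ring
  have hinteraction := mul_le_mul_of_nonneg_left
    (sum_one_sub_mul_log_rball_le hx (fun i => (hw i).le) hw1) hχ0
  have hlog := sum_mul_log_rball_sub_le hx (fun i => (hw i).le) hw1 hχ0 hχ1
  rw [kellerSegelEnergy, hentropy]
  linarith

theorem exists_sub_zero_le_of_sum_mul_le (hw : ∀ i, 0 ≤ w i) (hw1 : ∑ i, w i = 1) {m : ℝ}
    (hm : ∀ y, m ≤ V y)
    (hVW : Tendsto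
      (fun t : ℝ => (⨅ y : ℝ, (w 0 * V y + w (Fin.last (n + 1)) * V (t + y))) - log |t|)
      (cocompact ℝ) atTop)
    (c : ℝ) :
    ∃ T, ∀ x : Fin (n + 2) → ℝ, ∑ i, w i * V (x i) ≤ c + log⁺ (x (Fin.last (n + 1)) - x 0) →
      x (Fin.last (n + 1)) - x 0 ≤ T := by
  set N := Fin.last (n + 1)
  obtain ⟨R, hR⟩ := exists_abs_le_of_tendsto_cocompact_atTop hVW (c - (1 - (w 0 + w N)) * m)
  refine ⟨max R 1, fun x hx => ?_⟩
  set D := x N - x 0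
  rcases le_or_gt D 1 with hD | hD
  · exact le_max_of_le_right hD
  have hbdd : BddBelow (Set.range fun y => w 0 * V y + w N * V (D + y)) := by
    refine ⟨(w 0 + w N) * m, ?_⟩
    rintro _ ⟨y, rfl⟩
    linarith [mul_le_mul_of_nonneg_left (hm y) (hw 0),
      mul_le_mul_of_nonneg_left (hm (D + y)) (hw N)]
  have hinf : (⨅ y, w 0 * V y + w N * V (D + y)) ≤ w 0 * V (x 0) + w N * V (x N) := by
    simpa [D] using ciInf_le hbdd (x 0)
  have hpair : w 0 * V (x 0) + w N * V (x N) + (1 - (w 0 + w N)) * m ≤ ∑ i, w i * V (x i) := by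
    have := sum_mul_add_one_sub_sum_mul_le {0, N} hw hw1 (fun i => hm (x i))
    rwa [sum_pair Fin.last_pos.ne, sum_pair Fin.last_pos.ne] at this
  rw [posLog_eq_log (hD.le.trans (le_abs_self D))] at hx
  have hDR : |D| ≤ R := hR D (by rw [log_abs]; linarith)
  exact le_max_of_le_left ((le_abs_self D).trans hDR)

end KellerSegel

open KellerSegel in
/-- for `N ≥ 2`, positive weights summing to one, `0 < χ < 1`, `V`
continuous and coercive with `x ↦ inf_y (w₁V(y) + w_N V(x+y)) − log|x|` coercive, every
energy sublevel set is uniformly bounded: all particles satisfy `|xᵢ| ≤ ℓ`. -/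
theorem kellerSegel_sublevel_bounded (n : ℕ) (w : Fin (n + 2) → ℝ)
    (hw : ∀ i, 0 < w i) (hw1 : ∑ i, w i = 1) (χ : ℝ) (hχ0 : 0 < χ) (hχ1 : χ < 1)
    (V : ℝ → ℝ) (hVcont : Continuous V)
    (hVcoer : Tendsto V (cocompact ℝ) atTop)
    (hVW : Tendsto
      (fun t : ℝ => (⨅ y : ℝ, (w 0 * V y + w (Fin.last (n + 1)) * V (t + y))) -
        Real.log |t|) (cocompact ℝ) atTop)
    (E₀ : ℝ) :
    ∃ ℓ > 0, ∀ x : Fin (n + 2) → ℝ, StrictMono x →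
      kellerSegelEnergy n w V χ x ≤ E₀ →
      ∀ i : Fin (n + 2), |x i| ≤ ℓ := by
  obtain ⟨y₀, hy₀⟩ := hVcont.exists_forall_le hVcoer
  set c := E₀ - ∑ i, w i * Real.log (w i)
  obtain ⟨T, hT⟩ := exists_sub_zero_le_of_sum_mul_le (fun i => (hw i).le) hw1 hy₀ hVW c
  obtain ⟨R, hR⟩ := exists_abs_le_of_tendsto_cocompact_atTop hVcoer
    ((c + log⁺ T - (1 - w 0) * V y₀) / w 0)
  refine ⟨max (R + T) 1, lt_max_of_lt_right one_pos, fun x hx hE i => ?_⟩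
  have hpot : ∑ i, w i * V (x i) ≤ c + log⁺ (x (Fin.last (n + 1)) - x 0) := by
    linarith [le_kellerSegelEnergy (V := V) hx hw hw1 hχ0.le hχ1.le]
  have hdiam := hT x hpot
  have hpotT : ∑ i, w i * V (x i) ≤ c + log⁺ T :=
    hpot.trans (add_le_add_right
      (posLog_le_posLog (sub_nonneg.2 (hx.monotone (Fin.zero_le _))) hdiam) c)
  have hfirst := sum_mul_add_one_sub_sum_mul_le {0} (fun i => (hw i).le) hw1 (fun i => hy₀ (x i))
  rw [sum_singleton, sum_singleton] at hfirst
  have hx0 : |x 0| ≤ R := hR _ (by rw [le_div_iff₀ (hw 0)]; linarith)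
  have hxi := (abs_sub_le_sub_zero hx.monotone i 0).trans hdiam
  linarith [abs_sub_abs_le_abs_sub (x i) (x 0), le_max_left (R + T) 1]
end
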